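/- arXiv:1801.01796 — 2 statements merged into one kernel-verified Lean document; each statement's English description precedes it below -/
import Mathlib

section
/- For every snr > 0 and every rate R with 0 < R < 𝒞 = (1/2) ln(1 + snr), there exist integers ω ≥ 1, Λ ≥ 2ω−1, and T ≥ 1 such that the asymptotic state-evolution recursion for the (ω,Λ) base matrix satisfies ψ̄_c^T = 0 for all c ∈ {1,…,Λ}; that is, for all rates below the AWGN channel capacity, spatially coupled SPARCs with an (ω,Λ) base matrix decode fully in the large system limit. -/
/-!
Decoding proceeds as a wave from the boundary. If sections `1, …, t` are decoded after `t`
iterations, then for a section `c ≤ t + 1` the `i`-th row of its window sees at most `i + 1`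
undecoded sections, so its test statistic is at least
`(P/ω) Σ_{i<ω} 1/(σ²(1 + h(i+1)))` with `h = κ·snr/ω`. Comparing with `∫ dx/(1 + hx)`, this is at
least `κ⁻¹ (log(1 + (ω+1)h) - log(1 + h))`; for `Λ = ω²` that tends to `log(1 + snr) > 2R` as
`ω → ∞`. Taking `ω` large and `T = Λ` decodes every section.
-/

/-- The asymptotic state-evolution variance update for the `(ω, Λ)` base matrix:
`φ_r = σ²(1 + (κ·snr/ω) Σ_{c = c̲_r}^{c̄_r} ψ_c)` with `κ = (Λ+ω-1)/Λ`, `snr = P/σ²`,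
`c̲_r = max(1, r-ω+1)` and `c̄_r = min(r, Λ)`. -/
noncomputable def phiSE (σ2 P : ℝ) (ω Λ : ℕ) (ψ : ℕ → ℝ) (r : ℕ) : ℝ :=
  σ2 * (1 + (((Λ : ℝ) + ω - 1) / Λ) * (P / σ2) / ω *
    ∑ c ∈ Finset.Icc (max 1 (r + 1 - ω)) (min r Λ), ψ c)

/-- The asymptotic state-evolution recursion for the `(ω, Λ)` base matrix:
`ψ_c^0 = 1` and `ψ_c^{t+1} = 1 - 𝟙{(P/ω) Σ_{r=c}^{c+ω-1} 1/φ_r^t > 2R}`. -/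
noncomputable def psiSE (σ2 P R : ℝ) (ω Λ : ℕ) : ℕ → ℕ → ℝ
  | 0 => fun _ => 1
  | t + 1 => fun c =>
      1 - (if 2 * R < P / ω *
              ∑ r ∈ Finset.Icc c (c + ω - 1), (phiSE σ2 P ω Λ (psiSE σ2 P R ω Λ t) r)⁻¹
           then 1 else 0)

open Finset Real Filter Topology

/-- The coefficient `κ·snr/ω` in `phiSE`. -/
noncomputable def couplingGain (σ2 P : ℝ) (ω Λ : ℕ) : ℝ :=
  ((Λ : ℝ) + ω - 1) / Λ * (P / σ2) / ω

/-- The test statistic of a section whose predecessors are all decoded and whose successors are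
not: its `i`-th row then sees at most `i + 1` undecoded sections. -/
noncomputable def worstWindowSum (σ2 P : ℝ) (ω Λ : ℕ) : ℝ :=
  P / ω * ∑ i ∈ range ω, (σ2 * (1 + couplingGain σ2 P ω Λ * (i + 1)))⁻¹

section StateEvolution

variable {σ2 P R : ℝ} {ω Λ : ℕ}

lemma phiSE_eq (ψ : ℕ → ℝ) (r : ℕ) :
    phiSE σ2 P ω Λ ψ r =
      σ2 * (1 + couplingGain σ2 P ω Λ * ∑ c ∈ Icc (max 1 (r + 1 - ω)) (min r Λ), ψ c) :=
  rfl

lemma couplingGain_nonneg (hσ2 : 0 ≤ σ2) (hP : 0 ≤ P) (hω : 1 ≤ ω) :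
    0 ≤ couplingGain σ2 P ω Λ := by
  have : (1 : ℝ) ≤ ω := by exact_mod_cast hω
  exact div_nonneg (mul_nonneg (div_nonneg (by linarith) Λ.cast_nonneg) (div_nonneg hP hσ2))
    ω.cast_nonneg

lemma psiSE_nonneg (t c : ℕ) : 0 ≤ psiSE σ2 P R ω Λ t c := by
  cases t with
  | zero => exact zero_le_one
  | succ t => simp only [psiSE]; split_ifs <;> norm_num

lemma psiSE_le_one (t c : ℕ) : psiSE σ2 P R ω Λ t c ≤ 1 := by
  cases t with
  | zero => exact le_rfl
  | succ t => simp only [psiSE]; split_ifs <;> norm_num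

lemma psiSE_succ_eq_zero {t c : ℕ}
    (h : 2 * R < P / ω * ∑ r ∈ Icc c (c + ω - 1), (phiSE σ2 P ω Λ (psiSE σ2 P R ω Λ t) r)⁻¹) :
    psiSE σ2 P R ω Λ (t + 1) c = 0 := by
  simp only [psiSE, if_pos h, sub_self]

lemma phiSE_pos (hσ2 : 0 < σ2) (hP : 0 ≤ P) (hω : 1 ≤ ω) {ψ : ℕ → ℝ} (hψ : ∀ c, 0 ≤ ψ c)
    (r : ℕ) : 0 < phiSE σ2 P ω Λ ψ r := by
  have := couplingGain_nonneg (Λ := Λ) hσ2.le hP hω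
  have := sum_nonneg fun c (_ : c ∈ Icc (max 1 (r + 1 - ω)) (min r Λ)) => hψ c
  rw [phiSE_eq]
  positivity

lemma sum_le_sub_of_eq_zero {f : ℕ → ℝ} {s : Finset ℕ} {t r : ℕ} (hs : s ⊆ Icc 1 r)
    (hf1 : ∀ c, f c ≤ 1) (hf0 : ∀ c, 1 ≤ c → c ≤ t → f c = 0) :
    ∑ c ∈ s, f c ≤ (r - t : ℕ) := by
  have hsupp : ∀ c ∈ s, f c ≠ 0 → t < c := fun c hc hfc => by
    by_contra! hct
    exact hfc (hf0 c (mem_Icc.1 (hs hc)).1 hct)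
  calc ∑ c ∈ s, f c = ∑ c ∈ s with t < c, f c := (sum_filter_of_ne hsupp).symm
    _ ≤ #{c ∈ s | t < c} • (1 : ℝ) := sum_le_card_nsmul _ _ _ fun c _ => hf1 c
    _ ≤ #(Ioc t r) := by
        rw [nsmul_one]
        gcongr
        intro c hc
        have := mem_Icc.1 (hs (mem_filter.1 hc).1)
        exact mem_Ioc.2 ⟨(mem_filter.1 hc).2, this.2⟩
    _ = (r - t : ℕ) := by rw [Nat.card_Ioc]

lemma phiSE_le (hσ2 : 0 ≤ σ2) (hP : 0 ≤ P) (hω : 1 ≤ ω) {ψ : ℕ → ℝ} {t : ℕ}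
    (hψ1 : ∀ c, ψ c ≤ 1) (hψ0 : ∀ c, 1 ≤ c → c ≤ t → ψ c = 0) (r : ℕ) :
    phiSE σ2 P ω Λ ψ r ≤ σ2 * (1 + couplingGain σ2 P ω Λ * (r - t : ℕ)) := by
  have hwindow : Icc (max 1 (r + 1 - ω)) (min r Λ) ⊆ Icc 1 r :=
    Icc_subset_Icc (le_max_left _ _) (min_le_left _ _)
  rw [phiSE_eq]
  gcongr
  · exact couplingGain_nonneg hσ2 hP hω
  · exact sum_le_sub_of_eq_zero hwindow hψ1 hψ0

/-- Once the worst case clears the threshold, decoding propagates from the boundary by one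
section per iteration. -/
lemma psiSE_eq_zero_of_le (hσ2 : 0 < σ2) (hP : 0 < P) (hω : 1 ≤ ω)
    (hR : 2 * R < worstWindowSum σ2 P ω Λ)
    (t c : ℕ) (hc : 1 ≤ c) (hct : c ≤ t) : psiSE σ2 P R ω Λ t c = 0 := by
  induction t generalizing c with
  | zero => omega
  | succ t ih =>
    apply psiSE_succ_eq_zero
    refine hR.trans_le (mul_le_mul_of_nonneg_left ?_ (by positivity))
    rw [← Ico_add_one_right_eq_Icc, Nat.sub_add_cancel (by omega),
      sum_Ico_eq_sum_range, Nat.add_sub_cancel_left]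
    gcongr with i
    · exact phiSE_pos hσ2 hP.le hω (psiSE_nonneg t) _
    · refine (phiSE_le hσ2.le hP.le hω (psiSE_le_one t) ih _).trans ?_
      gcongr
      · exact couplingGain_nonneg hσ2.le hP.le hω
      · have : c + i - t ≤ i + 1 := by omega
        exact_mod_cast this

end StateEvolution

/-- Riemann-sum bound for `∫ h / (1 + x h) dx` over `[1, n + 1]`. -/
lemma log_sub_log_le_sum_div {h : ℝ} (hh : 0 ≤ h) (n : ℕ) :
    log (1 + (n + 1) * h) - log (1 + h) ≤ ∑ i ∈ range n, h / (1 + (i + 1) * h) := by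
  have htelescope := sum_range_sub (fun j : ℕ => log (1 + (j + 1) * h)) n
  push_cast at htelescope
  rw [zero_add, one_mul] at htelescope
  rw [← htelescope]
  gcongr with i
  have ha : 0 < 1 + (i + 1) * h := by positivity
  rw [← log_div (by positivity) ha.ne']
  calc log ((1 + (i + 1 + 1) * h) / (1 + (i + 1) * h))
      ≤ (1 + (i + 1 + 1) * h) / (1 + (i + 1) * h) - 1 := log_le_sub_one_of_pos (by positivity)
    _ = h / (1 + (i + 1) * h) := by field_simp; ring

section WorstWindowSum

variable {σ2 P : ℝ} {ω : ℕ}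

lemma log_sub_log_le_worstWindowSum {Λ : ℕ} (hσ2 : 0 < σ2) (hP : 0 < P) (hω : 1 ≤ ω)
    (hΛ : 1 ≤ Λ) :
    (((Λ : ℝ) + ω - 1) / Λ)⁻¹ *
        (log (1 + (ω + 1) * couplingGain σ2 P ω Λ) - log (1 + couplingGain σ2 P ω Λ)) ≤
      worstWindowSum σ2 P ω Λ := by
  rw [worstWindowSum]
  set κ : ℝ := ((Λ : ℝ) + ω - 1) / Λ
  set h := couplingGain σ2 P ω Λ
  have hω' : (1 : ℝ) ≤ ω := by exact_mod_cast hω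
  have hΛ' : (1 : ℝ) ≤ Λ := by exact_mod_cast hΛ
  have hκ : 0 < κ := div_pos (by linarith) (by linarith)
  have hh : h = κ * (P / σ2) / ω := rfl
  have hh0 : 0 ≤ h := couplingGain_nonneg hσ2.le hP.le hω
  calc κ⁻¹ * (log (1 + (ω + 1) * h) - log (1 + h))
      ≤ κ⁻¹ * ∑ i ∈ range ω, h / (1 + (i + 1) * h) := by
        gcongr
        exact log_sub_log_le_sum_div hh0 ω
    _ = P / ω * ∑ i ∈ range ω, (σ2 * (1 + h * (i + 1)))⁻¹ := by
        rw [mul_sum, mul_sum]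
        refine sum_congr rfl fun i _ => ?_
        have : 0 < 1 + (i + 1) * h := by positivity
        rw [hh] at this ⊢
        field_simp

/-- With `Λ = ω²` the rate loss `κ = (Λ + ω - 1) / Λ` is at most `1 + 1/ω`, and the gain
`h = κ·snr/ω` lies between `snr/ω` and `2·snr/ω`. -/
lemma log_sub_log_div_le_worstWindowSum_sq (hσ2 : 0 < σ2) (hP : 0 < P) (hω : 1 ≤ ω) :
    (log (1 + P / σ2) - log (1 + 2 * (P / σ2) / ω)) / (1 + 1 / ω) ≤
      worstWindowSum σ2 P ω (ω ^ 2) := by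
  refine le_trans ?_ (log_sub_log_le_worstWindowSum hσ2 hP hω (Nat.one_le_pow _ _ hω))
  set s := P / σ2
  set h := couplingGain σ2 P ω (ω ^ 2)
  set κ : ℝ := (((ω ^ 2 : ℕ) : ℝ) + ω - 1) / (ω ^ 2 : ℕ)
  have hω' : (1 : ℝ) ≤ ω := by exact_mod_cast hω
  have hs : 0 < s := div_pos hP hσ2
  have hκ_ge_one : 1 ≤ κ := by
    rw [le_div_iff₀ (by positivity)]
    linarith
  have hκ_le : κ ≤ 1 + 1 / ω := by
    rw [div_le_iff₀ (by positivity)]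
    push_cast
    field_simp
    linarith
  have hκ_le_two : κ ≤ 2 := by
    have : 1 / (ω : ℝ) ≤ 1 := div_le_one_of_le₀ hω' (by positivity)
    linarith
  have h0 : 0 ≤ h := couplingGain_nonneg hσ2.le hP.le hω
  have hωh : ω * h = κ * s := by
    change ω * (κ * s / ω) = κ * s
    field_simp
  have hlog_s : log (1 + s) ≤ log (1 + (ω + 1) * h) := by
    gcongr
    nlinarith
  have hlog_h : log (1 + h) ≤ log (1 + 2 * s / ω) := by
    gcongr
    rw [le_div_iff₀ (by positivity)]
    nlinarith
  have hX : 0 ≤ log (1 + (ω + 1) * h) - log (1 + h) := by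
    rw [sub_nonneg]
    gcongr
    nlinarith
  calc (log (1 + s) - log (1 + 2 * s / ω)) / (1 + 1 / ω)
      ≤ (log (1 + (ω + 1) * h) - log (1 + h)) / (1 + 1 / ω) := by gcongr
    _ ≤ (log (1 + (ω + 1) * h) - log (1 + h)) / κ :=
        div_le_div_of_nonneg_left hX (by positivity) hκ_le
    _ = κ⁻¹ * (log (1 + (ω + 1) * h) - log (1 + h)) := div_eq_inv_mul _ _

end WorstWindowSum

lemma tendsto_log_sub_log_div (s : ℝ) :
    Tendsto (fun n : ℕ => (log (1 + s) - log (1 + 2 * s / n)) / (1 + 1 / n)) atTop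
      (𝓝 (log (1 + s))) := by
  have h0 : Tendsto (fun n : ℕ => (1 : ℝ) / n) atTop (𝓝 0) := tendsto_one_div_atTop_nhds_zero_nat
  have hlog : Tendsto (fun n : ℕ => log (1 + 2 * s / n)) atTop (𝓝 0) := by
    have := (tendsto_const_nhds (x := (1 : ℝ)).add (h0.const_mul (2 * s))).log (by norm_num)
    simpa [div_eq_mul_inv] using this
  have := (tendsto_const_nhds (x := log (1 + s)).sub hlog).div
    (tendsto_const_nhds (x := (1 : ℝ)).add h0) (by norm_num)
  simpa [Pi.div_def] using this

lemma exists_lt_worstWindowSum_sq {σ2 P R : ℝ} (hσ2 : 0 < σ2) (hP : 0 < P)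
    (hR : 2 * R < log (1 + P / σ2)) :
    ∃ ω : ℕ, 1 ≤ ω ∧ 2 * R < worstWindowSum σ2 P ω (ω ^ 2) := by
  obtain ⟨ω, hgap, hω⟩ :=
    (((tendsto_log_sub_log_div _).eventually_const_lt hR).and (eventually_ge_atTop 1)).exists
  exact ⟨ω, hω, hgap.trans_le (log_sub_log_div_le_worstWindowSum_sq hσ2 hP hω)⟩

theorem stmt_5_general (σ2 P R : ℝ) (hσ2 : 0 < σ2) (hP : 0 < P)
    (hRcap : R < 1 / 2 * Real.log (1 + P / σ2)) :
    ∃ ω Λ T : ℕ, 1 ≤ ω ∧ 2 * ω - 1 ≤ Λ ∧ 1 ≤ T ∧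
      ∀ c ∈ Finset.Icc 1 Λ, psiSE σ2 P R ω Λ T c = 0 := by
  have hR : 2 * R < log (1 + P / σ2) := by linarith
  obtain ⟨ω, hω, hgap⟩ := exists_lt_worstWindowSum_sq hσ2 hP hR
  refine ⟨ω, ω ^ 2, ω ^ 2, hω, ?_, Nat.one_le_pow _ _ hω, fun c hc => ?_⟩
  · have : 2 * ω ≤ ω ^ 2 + 1 := by nlinarith
    omega
  · exact psiSE_eq_zero_of_le hσ2 hP hω hgap _ c (mem_Icc.1 hc).1 (mem_Icc.1 hc).2

theorem stmt_5 (σ2 P R : ℝ) (hσ2 : 0 < σ2) (hP : 0 < P) (hR : 0 < R)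
    (hRcap : R < 1 / 2 * Real.log (1 + P / σ2)) :
    ∃ ω Λ T : ℕ, 1 ≤ ω ∧ 2 * ω - 1 ≤ Λ ∧ 1 ≤ T ∧
      ∀ c ∈ Finset.Icc 1 Λ, psiSE σ2 P R ω Λ T c = 0 :=
  stmt_5_general σ2 P R hσ2 hP hRcap
end

section
/- In the asymptotic state-evolution recursion for the (ω,Λ) base matrix, the iterates are symmetric about the middle indices at every iteration: for all t ≥ 0, φ̄_r^t = φ̄_{Λ+ω−r}^t for all r ∈ {1,…,Λ+ω−1}, and ψ̄_c^t = ψ̄_{Λ+1−c}^t for all c ∈ {1,…,Λ}. -/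
/-!
The reflections `c ↦ Λ + 1 - c` of columns and `r ↦ Λ + ω - r` of rows map the column range
`[c̲_r, c̄_r]` of row `r` onto that of row `Λ + ω - r`, and the row range `[c, c + ω - 1]` of
column `c` onto that of column `Λ + 1 - c`. Hence a symmetric `ψ` yields a symmetric `φ` and vice
versa, and the claim follows by induction on `t` from the constant initial state.
-/

open Finset

theorem Finset.sum_Icc_reflect {M : Type*} [AddCommMonoid M] (f : ℕ → M) {a b n : ℕ}
    (ha : a ≤ n) (hb : b ≤ n) :
    ∑ i ∈ Icc a b, f (n - i) = ∑ i ∈ Icc (n - b) (n - a), f i := by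
  refine sum_nbij' (n - ·) (n - ·) ?_ ?_ ?_ ?_ ?_ <;> intro i hi <;>
    simp only [mem_Icc] at hi ⊢ <;> omega

section Symmetry

variable (σ2 P R : ℝ) (ω Λ : ℕ)

theorem phiSE_reflect {ψ : ℕ → ℝ} (hψ : ∀ c ∈ Icc 1 Λ, ψ c = ψ (Λ + 1 - c))
    {r : ℕ} (hr : r ∈ Icc 1 (Λ + ω - 1)) :
    phiSE σ2 P ω Λ ψ r = phiSE σ2 P ω Λ ψ (Λ + ω - r) := by
  rw [mem_Icc] at hr
  have hψ' : ∑ c ∈ Icc (max 1 (r + 1 - ω)) (min r Λ), ψ c =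
      ∑ c ∈ Icc (max 1 (r + 1 - ω)) (min r Λ), ψ (Λ + 1 - c) :=
    sum_congr rfl fun c hc => hψ c (by simp only [mem_Icc] at hc ⊢; omega)
  have hlo : Λ + 1 - min r Λ = max 1 (Λ + ω - r + 1 - ω) := by omega
  have hhi : Λ + 1 - max 1 (r + 1 - ω) = min (Λ + ω - r) Λ := by omega
  unfold phiSE
  rw [hψ', sum_Icc_reflect ψ (by omega) (by omega), hlo, hhi]

theorem psiSE_succ_reflect {t : ℕ}
    (hφ : ∀ r ∈ Icc 1 (Λ + ω - 1), phiSE σ2 P ω Λ (psiSE σ2 P R ω Λ t) r =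
      phiSE σ2 P ω Λ (psiSE σ2 P R ω Λ t) (Λ + ω - r))
    {c : ℕ} (hc : c ∈ Icc 1 Λ) :
    psiSE σ2 P R ω Λ (t + 1) c = psiSE σ2 P R ω Λ (t + 1) (Λ + 1 - c) := by
  rw [mem_Icc] at hc
  set φ := phiSE σ2 P ω Λ (psiSE σ2 P R ω Λ t)
  have hφ' : ∑ r ∈ Icc c (c + ω - 1), (φ r)⁻¹ = ∑ r ∈ Icc c (c + ω - 1), (φ (Λ + ω - r))⁻¹ :=
    sum_congr rfl fun r hr => by
      rw [hφ r (by simp only [mem_Icc] at hr ⊢; omega)]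
  have hlo : Λ + ω - (c + ω - 1) = Λ + 1 - c := by omega
  have hhi : Λ + ω - c = Λ + 1 - c + ω - 1 := by omega
  simp only [psiSE]
  rw [hφ', sum_Icc_reflect (fun r => (φ r)⁻¹) (by omega) (by omega), hlo, hhi]

theorem psiSE_reflect (t : ℕ) {c : ℕ} (hc : c ∈ Icc 1 Λ) :
    psiSE σ2 P R ω Λ t c = psiSE σ2 P R ω Λ t (Λ + 1 - c) := by
  induction t generalizing c with
  | zero => rfl
  | succ t ih =>
    exact psiSE_succ_reflect σ2 P R ω Λ (fun r hr => phiSE_reflect σ2 P ω Λ (fun _ => ih) hr) hc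

end Symmetry

theorem stmt_10_general (σ2 P R : ℝ) (ω Λ : ℕ) :
    ∀ t : ℕ,
      (∀ r ∈ Finset.Icc 1 (Λ + ω - 1),
        phiSE σ2 P ω Λ (psiSE σ2 P R ω Λ t) r =
          phiSE σ2 P ω Λ (psiSE σ2 P R ω Λ t) (Λ + ω - r)) ∧
      (∀ c ∈ Finset.Icc 1 Λ,
        psiSE σ2 P R ω Λ t c = psiSE σ2 P R ω Λ t (Λ + 1 - c)) := fun t =>
  ⟨fun _ hr => phiSE_reflect σ2 P ω Λ (fun _ => psiSE_reflect σ2 P R ω Λ t) hr,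
    fun _ => psiSE_reflect σ2 P R ω Λ t⟩

theorem stmt_10 (σ2 P R : ℝ) (ω Λ : ℕ)
    (hσ2 : 0 < σ2) (hP : 0 < P) (hR : 0 < R)
    (hω : 1 ≤ ω) (hΛ : 2 * ω - 1 ≤ Λ) :
    ∀ t : ℕ,
      (∀ r ∈ Finset.Icc 1 (Λ + ω - 1),
        phiSE σ2 P ω Λ (psiSE σ2 P R ω Λ t) r =
          phiSE σ2 P ω Λ (psiSE σ2 P R ω Λ t) (Λ + ω - r)) ∧
      (∀ c ∈ Finset.Icc 1 Λ,
        psiSE σ2 P R ω Λ t c = psiSE σ2 P R ω Λ t (Λ + 1 - c)) :=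
  stmt_10_general σ2 P R ω Λ
end
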